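/- Let q be a power of an odd prime and let g be an element of SL(2,F_q) of order 4. Then there exists a subgroup H of SL(2,F_q) containing g such that H is isomorphic to SL(2,F_3). -/

import Mathlib

/-!
If `2 ≠ 0` in `F`, the only involution of `SL(2, F)` is `-1`, so an element `g` of order 4
satisfies `g² = -1`. Since `-1` is a sum of two squares in a finite field, there is `h` with
`h² = -1`, `det h = 1` and `h g = -g h`; then `i ↦ g`, `j ↦ h` maps Hamilton's quaternions over
`ℤ` into `M₂(F)`, turning the norm into the determinant. The 24 Hurwitz units
`±1, ±i, ±j, ±k, (±1 ± i ± j ± k) / 2` form a group isomorphic to `SL(2, F₃)` (reduce the Hurwitz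
order mod 3), so their images give a homomorphism `SL(2, F₃) → SL(2, F)` hitting `g`. It is
injective because it sends `-1` to `-1 ≠ 1`, and `-1` lies in every nontrivial normal subgroup
of `SL(2, F₃)`.
-/

open Matrix Quaternion
open scoped MatrixGroups

instance Quaternion.instDecidableEq {R : Type*} [Zero R] [One R] [Neg R] [DecidableEq R] :
    DecidableEq ℍ[R] := fun a b =>
  decidable_of_iff (a.re = b.re ∧ a.imI = b.imI ∧ a.imJ = b.imJ ∧ a.imK = b.imK)
    QuaternionAlgebra.ext_iff.symm

namespace Matrix

theorem adjugate_fin_two_eq_trace_smul_one_sub {R : Type*} [CommRing R]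
    (X : Matrix (Fin 2) (Fin 2) R) : adjugate X = X.trace • 1 - X := by
  ext i j
  fin_cases i <;> fin_cases j <;> simp [adjugate_fin_two, trace_fin_two]

theorem mul_trace_smul_one_sub_eq_det_smul {R : Type*} [CommRing R]
    (X : Matrix (Fin 2) (Fin 2) R) : X * (X.trace • 1 - X) = X.det • 1 := by
  rw [← adjugate_fin_two_eq_trace_smul_one_sub, mul_adjugate]

variable {F : Type*} [Field F]

theorem trace_eq_zero_of_mul_self_eq_neg_one {X : Matrix (Fin 2) (Fin 2) F}
    (hdet : X.det = 1) (hX : X * X = -1) : X.trace = 0 := by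
  have h := X.mul_trace_smul_one_sub_eq_det_smul
  rw [mul_sub, mul_smul_comm, mul_one, hX, hdet, one_smul, sub_neg_eq_add, add_eq_right] at h
  refine (smul_eq_zero.mp h).resolve_right ?_
  rintro rfl
  simp at hdet

theorem eq_one_or_eq_neg_one_of_mul_self_eq_one [NeZero (2 : F)] {X : Matrix (Fin 2) (Fin 2) F}
    (hdet : X.det = 1) (hX : X * X = 1) : X = 1 ∨ X = -1 := by
  have h := X.mul_trace_smul_one_sub_eq_det_smul
  rw [mul_sub, mul_smul_comm, mul_one, hX, hdet, one_smul, sub_eq_iff_eq_add, ← two_smul F] at h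
  have htr : X.trace ≠ 0 := by
    rintro h0
    have h20 : (0 : F) = 2 := by simpa [h0] using congrFun (congrFun h 0) 0
    exact two_ne_zero h20.symm
  obtain ⟨c, hXc⟩ : ∃ c : F, X = c • 1 :=
    ⟨X.trace⁻¹ * 2, by rw [mul_smul, ← h, inv_smul_smul₀ htr]⟩
  have hc : c * c = 1 := by
    simpa [hXc, smul_smul] using congrFun (congrFun hX 0) 0
  rcases mul_self_eq_one_iff.mp hc with rfl | rfl <;> simp [hXc]

end Matrix

namespace Matrix.SpecialLinearGroup

variable {F : Type*} [Field F] [NeZero (2 : F)]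

theorem sq_eq_neg_one_of_orderOf_eq_four {g : SL(2, F)} (hg : orderOf g = 4) : g ^ 2 = -1 := by
  have h4 : (g ^ 2) ^ 2 = 1 := by
    rw [← pow_mul, show 2 * 2 = orderOf g by omega, pow_orderOf_eq_one]
  have h2 : g ^ 2 ≠ 1 := fun h => by simpa [hg] using orderOf_dvd_of_pow_eq_one h
  have hmat : ((g ^ 2 : SL(2, F)) : Matrix (Fin 2) (Fin 2) F) * (g ^ 2 : SL(2, F)) = 1 := by
    rw [← coe_mul, ← sq, h4, coe_one]
  rcases eq_one_or_eq_neg_one_of_mul_self_eq_one (g ^ 2).prop hmat with h | h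
  · exact absurd (Subtype.ext h) h2
  · exact Subtype.ext h

end Matrix.SpecialLinearGroup

section

variable {F : Type*} [Field F]

structure IsQuaternionPair (G H : Matrix (Fin 2) (Fin 2) F) : Prop where
  det_left : G.det = 1
  det_right : H.det = 1
  mul_self_left : G * G = -1
  mul_self_right : H * H = -1
  anticomm : H * G = -(G * H)

namespace IsQuaternionPair

variable {G H : Matrix (Fin 2) (Fin 2) F} (hp : IsQuaternionPair G H)
include hp

def basis : QuaternionAlgebra.Basis (Matrix (Fin 2) (Fin 2) F) (-1 : ℤ) 0 (-1) where
  i := G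
  j := H
  k := G * H
  i_mul_i := by simp [hp.mul_self_left]
  j_mul_j := by simp [hp.mul_self_right]
  i_mul_j := rfl
  j_mul_i := by simp [hp.anticomm]

theorem trace_left : G.trace = 0 :=
  trace_eq_zero_of_mul_self_eq_neg_one hp.det_left hp.mul_self_left

theorem trace_right : H.trace = 0 :=
  trace_eq_zero_of_mul_self_eq_neg_one hp.det_right hp.mul_self_right

theorem trace_mul : (G * H).trace = 0 := by
  refine trace_eq_zero_of_mul_self_eq_neg_one
    (by rw [det_mul, hp.det_left, hp.det_right, one_mul]) ?_
  rw [mul_assoc, ← mul_assoc H, hp.anticomm, neg_mul, mul_neg, ← mul_assoc, ← mul_assoc,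
    hp.mul_self_left, mul_assoc, hp.mul_self_right]
  simp

def toMatrix : ℍ[ℤ] →ₐ[ℤ] Matrix (Fin 2) (Fin 2) F := hp.basis.liftHom

theorem toMatrix_apply (q : ℍ[ℤ]) : hp.toMatrix q =
    (q.re : F) • 1 + (q.imI : F) • G + (q.imJ : F) • H + (q.imK : F) • (G * H) := by
  change hp.basis.lift q = _
  simp only [QuaternionAlgebra.Basis.lift, basis, Algebra.algebraMap_eq_smul_one,
    Int.cast_smul_eq_zsmul]

theorem toMatrix_coe (n : ℤ) : hp.toMatrix (Quaternion.coe n) = (n : F) • 1 := by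
  rw [toMatrix_apply]
  simp [Quaternion.coe]

theorem trace_toMatrix (q : ℍ[ℤ]) : (hp.toMatrix q).trace = 2 * q.re := by
  simp [toMatrix_apply, hp.trace_left, hp.trace_right, hp.trace_mul, mul_comm]

theorem adjugate_toMatrix (q : ℍ[ℤ]) : adjugate (hp.toMatrix q) = hp.toMatrix (star q) := by
  rw [adjugate_fin_two_eq_trace_smul_one_sub, trace_toMatrix, Quaternion.star_eq_two_re_sub,
    map_sub, toMatrix_coe]
  push_cast
  rfl

theorem det_toMatrix (q : ℍ[ℤ]) : (hp.toMatrix q).det = normSq q := by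
  have h := mul_adjugate (hp.toMatrix q)
  rw [adjugate_toMatrix, ← map_mul, self_mul_star] at h
  simpa [toMatrix_coe] using (congrFun (congrFun h 0) 0).symm

theorem toMatrix_two_mul (q : ℍ[ℤ]) : hp.toMatrix (2 * q) = (2 : F) • hp.toMatrix q := by
  rw [map_mul, map_ofNat, two_mul, two_smul]

end IsQuaternionPair

theorem isQuaternionPair_of_entries {α β γ x y z : F} (hG : α ^ 2 + β * γ = -1)
    (hH : x ^ 2 + y * z = -1) (horth : 2 * α * x + γ * y + β * z = 0) :
    IsQuaternionPair !![α, β; γ, -α] !![x, y; z, -x] where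
  det_left := by rw [det_fin_two_of]; linear_combination -hG
  det_right := by rw [det_fin_two_of]; linear_combination -hH
  mul_self_left := by
    ext i j; fin_cases i <;> fin_cases j <;> simp <;> first | ring1 | linear_combination hG
  mul_self_right := by
    ext i j; fin_cases i <;> fin_cases j <;> simp <;> first | ring1 | linear_combination hH
  anticomm := by
    ext i j; fin_cases i <;> fin_cases j <;> simp <;> first | ring1 | linear_combination horth

theorem exists_isQuaternionPair [Finite F] {G : Matrix (Fin 2) (Fin 2) F} (hdet : G.det = 1)
    (hG : G * G = -1) : ∃ H, IsQuaternionPair G H := by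
  obtain ⟨u, v, huv⟩ : ∃ u v : F, u ^ 2 + v ^ 2 = -1 := by
    have : NeZero (ringChar F) := ⟨CharP.ringChar_ne_zero_of_finite F⟩
    obtain ⟨a, b, hab⟩ := CharP.sq_add_sq F (ringChar F) (-1)
    exact ⟨a, b, by exact_mod_cast hab⟩
  have htr := trace_eq_zero_of_mul_self_eq_neg_one hdet hG
  obtain ⟨α, β, γ, rfl, hαβγ⟩ : ∃ α β γ : F, G = !![α, β; γ, -α] ∧ α ^ 2 + β * γ = -1 := by
    rw [trace_fin_two] at htr
    rw [det_fin_two] at hdet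
    refine ⟨G 0 0, G 0 1, G 1 0, ?_, by linear_combination -hdet + G 0 0 * htr⟩
    rw [← eq_neg_of_add_eq_zero_right htr]
    exact eta_fin_two G
  -- With `y = β * v` (resp. `z = γ * v`) and the linear equation solved for `z` (resp. `y`),
  -- `x ^ 2 + y * z = (x - α * v) ^ 2 + v ^ 2`.
  obtain ⟨x, y, z, hH, horth⟩ :
      ∃ x y z : F, x ^ 2 + y * z = -1 ∧ 2 * α * x + γ * y + β * z = 0 := by
    by_cases hβ : β = 0
    · by_cases hγ : γ = 0
      · exact ⟨0, 1, -1, by ring, by rw [hβ, hγ]; ring⟩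
      · refine ⟨u + α * v, -(2 * α * (u + α * v) + β * (γ * v)) / γ, γ * v, ?_, ?_⟩
        · field_simp
          linear_combination huv - v ^ 2 * hαβγ
        · field_simp
          ring
    · refine ⟨u + α * v, β * v, -(2 * α * (u + α * v) + γ * (β * v)) / β, ?_, ?_⟩
      · field_simp
        linear_combination huv - v ^ 2 * hαβγ
      · field_simp
        ring
  exact ⟨_, isQuaternionPair_of_entries hαβγ hH horth⟩

end

namespace SL2ZMod3

def doubledHurwitzUnits : List ℍ[ℤ] :=
  [⟨2, 0, 0, 0⟩, ⟨-2, 0, 0, 0⟩, ⟨0, 2, 0, 0⟩, ⟨0, -2, 0, 0⟩,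
   ⟨0, 0, 2, 0⟩, ⟨0, 0, -2, 0⟩, ⟨0, 0, 0, 2⟩, ⟨0, 0, 0, -2⟩] ++
  do
    let a ← [1, -1]; let b ← [1, -1]; let c ← [1, -1]; let d ← [1, -1]
    pure ⟨a, b, c, d⟩

-- `q / 2` mod 3 (so `1 / 2 = 2`), where `i`, `j` and `k = i * j` go to the three matrices below.
def hurwitzReduce (q : ℍ[ℤ]) : Matrix (Fin 2) (Fin 2) (ZMod 3) :=
  (2 : ZMod 3) • ((q.re : ZMod 3) • 1 + (q.imI : ZMod 3) • !![0, -1; 1, 0]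
    + (q.imJ : ZMod 3) • !![1, 1; 1, -1] + (q.imK : ZMod 3) • !![-1, 1; 1, 1])

def hurwitz (M : SL(2, ZMod 3)) : ℍ[ℤ] :=
  (doubledHurwitzUnits.find? (hurwitzReduce · = M)).getD 0

set_option maxHeartbeats 4000000 in
theorem hurwitz_mul : ∀ M N : SL(2, ZMod 3), 2 * hurwitz (M * N) = hurwitz M * hurwitz N := by
  decide

theorem normSq_hurwitz : ∀ M : SL(2, ZMod 3), normSq (hurwitz M) = 4 := by
  decide

theorem hurwitz_neg_one : hurwitz (-1) = ⟨-2, 0, 0, 0⟩ := by ext <;> decide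

def S : SL(2, ZMod 3) := ⟨!![0, -1; 1, 0], by decide⟩

theorem hurwitz_S : hurwitz S = ⟨0, 2, 0, 0⟩ := by ext <;> decide

theorem sq_or_pow_three_or_commutator_sq_eq_neg_one : ∀ M : SL(2, ZMod 3), M ≠ 1 →
    M ^ 2 = -1 ∨ M ^ 3 = -1 ∨ ∃ x : SL(2, ZMod 3), (M * x * M⁻¹ * x⁻¹) ^ 2 = -1 := by
  decide

theorem injective_of_map_neg_one_ne_one {G : Type*} [Group G] (f : SL(2, ZMod 3) →* G)
    (hf : f (-1) ≠ 1) : Function.Injective f := by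
  refine (injective_iff_map_eq_one f).mpr fun M hM => ?_
  by_contra hne
  rcases sq_or_pow_three_or_commutator_sq_eq_neg_one M hne with h | h | ⟨x, h⟩ <;>
    exact hf (by simp [← h, hM])

end SL2ZMod3

namespace IsQuaternionPair

variable {F : Type*} [Field F] {G H : Matrix (Fin 2) (Fin 2) F} (hp : IsQuaternionPair G H)
include hp

theorem half_toMatrix_hurwitz_mul (M N : SL(2, ZMod 3)) :
    (2⁻¹ : F) • hp.toMatrix (SL2ZMod3.hurwitz (M * N)) =
      ((2⁻¹ : F) • hp.toMatrix (SL2ZMod3.hurwitz M)) *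
        ((2⁻¹ : F) • hp.toMatrix (SL2ZMod3.hurwitz N)) := by
  rw [smul_mul_smul, ← map_mul, ← SL2ZMod3.hurwitz_mul, toMatrix_two_mul, smul_smul]
  field_simp

variable [NeZero (2 : F)]

theorem det_half_toMatrix_hurwitz (M : SL(2, ZMod 3)) :
    ((2⁻¹ : F) • hp.toMatrix (SL2ZMod3.hurwitz M)).det = 1 := by
  rw [det_smul, det_toMatrix, SL2ZMod3.normSq_hurwitz, Fintype.card_fin, inv_pow]
  push_cast
  rw [show (4 : F) = 2 ^ 2 by norm_num, inv_mul_cancel₀ (pow_ne_zero 2 two_ne_zero)]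

def hurwitzHom : SL(2, ZMod 3) →* SL(2, F) :=
  MonoidHom.mk' (fun M => ⟨_, hp.det_half_toMatrix_hurwitz M⟩) fun M N =>
    Subtype.ext (hp.half_toMatrix_hurwitz_mul M N)

theorem coe_hurwitzHom (M : SL(2, ZMod 3)) :
    (hp.hurwitzHom M : Matrix (Fin 2) (Fin 2) F) =
      (2⁻¹ : F) • hp.toMatrix (SL2ZMod3.hurwitz M) :=
  rfl

theorem coe_hurwitzHom_S : (hp.hurwitzHom SL2ZMod3.S : Matrix (Fin 2) (Fin 2) F) = G := by
  rw [coe_hurwitzHom, toMatrix_apply, SL2ZMod3.hurwitz_S]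
  simpa using inv_smul_smul₀ two_ne_zero G

theorem coe_hurwitzHom_neg_one : (hp.hurwitzHom (-1) : Matrix (Fin 2) (Fin 2) F) = -1 := by
  rw [coe_hurwitzHom, toMatrix_apply, SL2ZMod3.hurwitz_neg_one]
  simpa using inv_smul_smul₀ (two_ne_zero : (2 : F) ≠ 0) (1 : Matrix (Fin 2) (Fin 2) F)

theorem hurwitzHom_injective : Function.Injective hp.hurwitzHom := by
  refine SL2ZMod3.injective_of_map_neg_one_ne_one _ fun h => ?_
  have h1 : (-1 : Matrix (Fin 2) (Fin 2) F) = 1 := by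
    rw [← hp.coe_hurwitzHom_neg_one, h]
    rfl
  have h00 : (-1 : F) = 1 := by simpa using congrFun (congrFun h1 0) 0
  exact two_ne_zero (by linear_combination -h00 : (2 : F) = 0)

end IsQuaternionPair

/-- If g is an element of order 4 in SL(2, F_q), q a power of an odd prime, then
there is a subgroup of SL(2, F_q) containing g which is isomorphic to SL(2, F₃). -/
theorem mem_subgroup_iso_SL2_F3_of_orderOf_eq_four {F : Type*} [Field F] [Fintype F]
    (hq : Odd (Fintype.card F)) (g : Matrix.SpecialLinearGroup (Fin 2) F)
    (hg : orderOf g = 4) :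
    ∃ H : Subgroup (Matrix.SpecialLinearGroup (Fin 2) F),
      g ∈ H ∧ Nonempty (H ≃* Matrix.SpecialLinearGroup (Fin 2) (ZMod 3)) := by
  have : NeZero (2 : F) :=
    ⟨Ring.two_ne_zero fun h => Nat.not_even_iff_odd.mpr hq
      (Nat.even_iff.mpr (FiniteField.even_card_iff_char_two.mp h))⟩
  have hg2 : (g : Matrix (Fin 2) (Fin 2) F) * g = -1 := by
    simpa [sq] using congrArg (fun x : SL(2, F) => (x : Matrix (Fin 2) (Fin 2) F))
      (SpecialLinearGroup.sq_eq_neg_one_of_orderOf_eq_four hg)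
  obtain ⟨H, hp⟩ := exists_isQuaternionPair g.prop hg2
  exact ⟨hp.hurwitzHom.range, ⟨SL2ZMod3.S, Subtype.ext hp.coe_hurwitzHom_S⟩,
    ⟨(MonoidHom.ofInjective hp.hurwitzHom_injective).symm⟩⟩
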